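/- For every real t ≥ 0, lim_{n→∞} [ ((1+t/n)^{n−1} − 1 + ((n−1)t/n)·(1+t/n)^{n−2}) / ((1+t/n)^n − t) − t·((1+t/n)^{n−1} − 1)² / ((1+t/n)^n − t)² ] = (e^t − 1 + t·e^t)/(e^t − t) − t·(e^t − 1)²/(e^t − t)². -/

import Mathlib

/-!
Every power `(1 + t/n)^(n - k)` tends to `e^t`, and the coefficient `(n - 1)t/n` tends to `t`,
so the expression converges by continuity of the field operations; the limiting denominators
do not vanish because `e^t ≥ 1 + t > t`.
-/

open Filter Topology

lemma tendsto_pow_sub_of_tendsto_pow {𝕜 : Type*} [NormedDivisionRing 𝕜] {f : ℕ → 𝕜} {L : 𝕜}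
    (hf : Tendsto f atTop (𝓝 1)) (hL : Tendsto (fun n => f n ^ n) atTop (𝓝 L)) (k : ℕ) :
    Tendsto (fun n => f n ^ (n - k)) atTop (𝓝 L) := by
  have h := hL.mul ((hf.pow k).inv₀ (by simp))
  rw [one_pow, inv_one, mul_one] at h
  refine h.congr' ?_
  filter_upwards [eventually_ge_atTop k, hf.eventually_ne one_ne_zero] with n hkn hn
  exact (pow_sub₀ _ hn hkn).symm

lemma tendsto_one_add_div_natCast (t : ℝ) :
    Tendsto (fun n : ℕ => 1 + t / n) atTop (𝓝 1) := by
  simpa using (tendsto_const_div_atTop_nhds_zero_nat t).const_add 1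

lemma tendsto_one_add_div_pow_sub_exp (t : ℝ) (k : ℕ) :
    Tendsto (fun n : ℕ => (1 + t / n) ^ (n - k)) atTop (𝓝 (Real.exp t)) :=
  tendsto_pow_sub_of_tendsto_pow (tendsto_one_add_div_natCast t)
    (Real.tendsto_one_add_div_pow_exp t) k

lemma tendsto_natCast_sub_one_mul_div (t : ℝ) :
    Tendsto (fun n : ℕ => ((n : ℝ) - 1) * t / n) atTop (𝓝 t) := by
  have h := (tendsto_const_div_atTop_nhds_zero_nat t).const_sub t
  rw [sub_zero] at h
  refine h.congr' ?_
  filter_upwards [eventually_ne_atTop 0] with n hn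
  field_simp

theorem Dn_rescaled_limit_general (t : ℝ) :
    Tendsto (fun n : ℕ =>
        ((1 + t / n) ^ (n - 1) - 1 + (((n : ℝ) - 1) * t / n) * (1 + t / n) ^ (n - 2)) /
            ((1 + t / n) ^ n - t) -
          t * ((1 + t / n) ^ (n - 1) - 1) ^ 2 / ((1 + t / n) ^ n - t) ^ 2)
      atTop
      (nhds ((Real.exp t - 1 + t * Real.exp t) / (Real.exp t - t) -
        t * (Real.exp t - 1) ^ 2 / (Real.exp t - t) ^ 2)) := by
  have hden : Real.exp t - t ≠ 0 := by linarith [Real.add_one_le_exp t]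
  have h1 := tendsto_one_add_div_pow_sub_exp t 1
  have hB := (Real.tendsto_one_add_div_pow_exp t).sub_const t
  have hA := (h1.sub_const 1).add ((tendsto_natCast_sub_one_mul_div t).mul
    (tendsto_one_add_div_pow_sub_exp t 2))
  have hC := ((h1.sub_const 1).pow 2).const_mul t
  exact (hA.div hB hden).sub (hC.div (hB.pow 2) (pow_ne_zero 2 hden))

/-- Rescaled conditional density of zeros given a critical point at 0, for SU(2)
polynomials: with `t = n|z|²`, the radial density converges to
`(e^t − 1 + te^t)/(e^t − t) − t(e^t − 1)²/(e^t − t)²`. -/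
theorem Dn_rescaled_limit (t : ℝ) (ht : 0 ≤ t) :
    Tendsto (fun n : ℕ =>
        ((1 + t / n) ^ (n - 1) - 1 + (((n : ℝ) - 1) * t / n) * (1 + t / n) ^ (n - 2)) /
            ((1 + t / n) ^ n - t) -
          t * ((1 + t / n) ^ (n - 1) - 1) ^ 2 / ((1 + t / n) ^ n - t) ^ 2)
      atTop
      (nhds ((Real.exp t - 1 + t * Real.exp t) / (Real.exp t - t) -
        t * (Real.exp t - 1) ^ 2 / (Real.exp t - t) ^ 2)) :=
  Dn_rescaled_limit_general t
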